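/- arXiv:2012.02461 — 4 statements merged into one kernel-verified Lean document; each statement's English description precedes it below -/
import Mathlib

section
/- For all real ε with 0 < ε ≤ 2, we have log((e^ε + 1)/(e^ε − 1)) < log(1/ε) + 1. -/
open Real

theorem log_coth_lt (ε : ℝ) (h0 : 0 < ε) (h2 : ε ≤ 2) :
    Real.log ((Real.exp ε + 1) / (Real.exp ε - 1)) < Real.log (1 / ε) + 1 := by
  have he : 1 < Real.exp ε := by simpa using Real.exp_lt_exp.mpr h0
  have hd : 0 < Real.exp ε - 1 := by linarith
  have hsum : 1 + ε + ε^2/2 + ε^3/6 + ε^4/24 + ε^5/120 ≤ Real.exp ε := by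
    have h := Real.sum_le_exp_of_nonneg h0.le 6
    simp [Finset.sum_range_succ, Nat.factorial] at h
    linarith
  have key : 12 + 6*ε + ε^2 < Real.exp ε * (12 - 6*ε + ε^2) := by
    nlinarith [pow_pos h0 5, sq_nonneg (ε - 1), sq_nonneg ε, pow_pos h0 3]
  have he1 : (2.7182818283 : ℝ) < Real.exp 1 := Real.exp_one_gt_d9
  have h1 : (Real.exp ε + 1)/(Real.exp ε - 1) < Real.exp 1 / ε := by
    rw [div_lt_div_iff₀ hd h0]
    nlinarith [mul_pos hd h0, sq_nonneg ε]
  calc Real.log ((Real.exp ε + 1)/(Real.exp ε - 1))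
      < Real.log (Real.exp 1 / ε) := Real.log_lt_log (by positivity) h1
    _ = Real.log (1/ε) + 1 := by
        rw [Real.log_div (Real.exp_ne_zero 1) h0.ne', Real.log_exp,
          Real.log_div one_ne_zero h0.ne', Real.log_one]
        ring
end

section
/- Let d ≥ 0 and ψ ∈ [0, π/2). Suppose a point z = x + iy in the upper half-plane satisfies y ≥ 1 and |z| ≤ e^d / cos(ψ). If A is defined by A² + 1 = (e^d/cos ψ)², then the hyperbolic distance from i to z is at most the hyperbolic distance from i to 2A + i, and hence cosh(d(i, z)) ≤ 2e^{2d}/cos²(ψ) − 1. -/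
/-!
Both distances are read off from `cosh d(i, z) = (‖z‖² + 1) / (2 Im z)`. With `E = e^d / cos ψ`,
the hypotheses `Im z ≥ 1` and `‖z‖ ≤ E` give `cosh d(i, z) ≤ (E² + 1) / 2`, which is at most
`2E² - 1 = 2A² + 1 = cosh d(i, 2A + i)` because `E² = A² + 1 ≥ 1`.
-/

open Real

namespace UpperHalfPlane

theorem cosh_dist_I (z : ℍ) : cosh (dist I z) = (‖(z : ℂ)‖ ^ 2 + 1) / (2 * z.im) := by
  have hdist : dist (I : ℂ) z ^ 2 = ‖(z : ℂ)‖ ^ 2 - 2 * z.im + 1 := by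
    simp only [coe_I, Complex.dist_eq, Complex.sq_norm, Complex.normSq_apply, Complex.sub_re,
      Complex.sub_im, Complex.I_re, Complex.I_im, coe_im]
    ring
  rw [cosh_dist, hdist, I_im]
  field_simp [z.im_pos.ne']
  ring

theorem cosh_dist_I_le_of_norm_le {z : ℍ} {E : ℝ} (hz : 1 ≤ z.im) (hzE : ‖(z : ℂ)‖ ≤ E) :
    cosh (dist I z) ≤ (E ^ 2 + 1) / 2 := by
  rw [cosh_dist_I, div_le_div_iff₀ (by linarith) two_pos]
  have hsq : ‖(z : ℂ)‖ ^ 2 ≤ E ^ 2 := pow_le_pow_left₀ (norm_nonneg _) hzE 2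
  nlinarith [sq_nonneg E]

end UpperHalfPlane

open UpperHalfPlane

theorem cosh_dist_le_of_norm_le_general (d ψ : ℝ)
    (A : ℝ) (hA : A ^ 2 + 1 = (Real.exp d / Real.cos ψ) ^ 2)
    (i z w : UpperHalfPlane)
    (hi : (i : ℂ) = Complex.I)
    (hz : 1 ≤ z.im) (hznorm : ‖(z : ℂ)‖ ≤ Real.exp d / Real.cos ψ)
    (hw : (w : ℂ) = 2 * A + Complex.I) :
    dist i z ≤ dist i w ∧
    Real.cosh (dist i z) ≤ 2 * Real.exp (2 * d) / Real.cos ψ ^ 2 - 1 := by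
  obtain rfl : i = I := UpperHalfPlane.ext hi
  set E := exp d / cos ψ
  have hw_cosh : cosh (dist I w) = 2 * E ^ 2 - 1 := by
    have hw_im : w.im = 1 := by rw [← coe_im, hw]; simp
    rw [cosh_dist_I, hw, hw_im, Complex.sq_norm, Complex.normSq_apply]
    simp only [Complex.add_re, Complex.add_im, Complex.mul_re, Complex.mul_im, Complex.ofReal_re,
      Complex.ofReal_im, Complex.I_re, Complex.I_im, Complex.re_ofNat, Complex.im_ofNat]
    linear_combination 2 * hA
  have hz_cosh : cosh (dist I z) ≤ 2 * E ^ 2 - 1 :=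
    (cosh_dist_I_le_of_norm_le hz hznorm).trans (by nlinarith [sq_nonneg A])
  refine ⟨?_, ?_⟩
  · rw [← hw_cosh, cosh_le_cosh, abs_of_nonneg dist_nonneg, abs_of_nonneg dist_nonneg] at hz_cosh
    exact hz_cosh
  · rwa [div_pow, ← exp_nat_mul, Nat.cast_ofNat, ← mul_div_assoc] at hz_cosh

theorem cosh_dist_le_of_norm_le (d ψ : ℝ) (hd : 0 ≤ d) (hψ0 : 0 ≤ ψ) (hψ : ψ < π / 2)
    (A : ℝ) (hA0 : 0 ≤ A) (hA : A ^ 2 + 1 = (Real.exp d / Real.cos ψ) ^ 2)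
    (i z w : UpperHalfPlane)
    (hi : (i : ℂ) = Complex.I)
    (hz : 1 ≤ z.im) (hznorm : ‖(z : ℂ)‖ ≤ Real.exp d / Real.cos ψ)
    (hw : (w : ℂ) = 2 * A + Complex.I) :
    dist i z ≤ dist i w ∧
    Real.cosh (dist i z) ≤ 2 * Real.exp (2 * d) / Real.cos ψ ^ 2 - 1 :=
  cosh_dist_le_of_norm_le_general d ψ A hA i z w hi hz hznorm hw
end

section
/- For all ε with 0 < ε ≤ 2 and all θ₀ with 0 < θ₀ ≤ π/2, if r ≥ log(2/sin θ₀) + log(1/ε) + 1, then 2r ≥ arccosh((1 + cosh ε)/(sinh²(ε/2) sin²θ₀) − 1). -/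
open Real

noncomputable def arcosh (x : ℝ) : ℝ := Real.log (x + Real.sqrt (x ^ 2 - 1))

/-!
Write `c = coth (ε / 2) = (e^ε + 1) / (e^ε - 1)`. The argument of `arcosh` is `2 (c / sin θ₀)² - 1`,
and `arcosh y ≤ log (2 y)` reduces the claim to `log (2 c / sin θ₀) ≤ r`, that is, to `c ≤ e / ε`.
This last bound, `ε (e^ε + 1) ≤ e (e^ε - 1)` on `(0, 2]`, already holds with `e^ε` replaced by its
Taylor polynomial of degree four.
-/

theorem mul_exp_add_one_le {x : ℝ} (hx0 : 0 ≤ x) (hx2 : x ≤ 2) :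
    x * (exp x + 1) ≤ exp 1 * (exp x - 1) := by
  have he : 2.718 ≤ exp 1 := by linarith [exp_one_gt_d9]
  have htaylor : 1 + x + x ^ 2 / 2 + x ^ 3 / 6 + x ^ 4 / 24 ≤ exp x := by
    simpa [Finset.sum_range_succ, Nat.factorial] using sum_le_exp_of_nonneg hx0 5
  have h2x : 0 ≤ 2 - x := sub_nonneg.2 hx2
  have hpoly : exp 1 + x ≤ (exp 1 - x) * (1 + x + x ^ 2 / 2 + x ^ 3 / 6 + x ^ 4 / 24) := by
    -- the difference of the two sides is `x` times this factor
    have hfactor : 0 ≤ exp 1 * (1 + x / 2 + x ^ 2 / 6 + x ^ 3 / 24)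
        - (2 + x + x ^ 2 / 2 + x ^ 3 / 6 + x ^ 4 / 24) := by
      nlinarith [mul_nonneg hx0 h2x, mul_nonneg (pow_nonneg hx0 2) h2x, pow_nonneg hx0 3,
        mul_nonneg (pow_nonneg hx0 3) h2x]
    nlinarith [mul_nonneg hx0 hfactor]
  nlinarith [mul_le_mul_of_nonneg_left htaylor (by linarith : 0 ≤ exp 1 - x)]

theorem exp_add_one_div_exp_sub_one_le {x : ℝ} (hx0 : 0 < x) (hx2 : x ≤ 2) :
    (exp x + 1) / (exp x - 1) ≤ exp 1 / x := by
  rw [div_le_div_iff₀ (by linarith [add_one_lt_exp hx0.ne']) hx0, mul_comm]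
  exact mul_exp_add_one_le hx0.le hx2

theorem one_add_cosh_div_sinh_half_sq (x : ℝ) :
    (1 + cosh x) / sinh (x / 2) ^ 2 = 2 * ((exp x + 1) / (exp x - 1)) ^ 2 := by
  have hx : exp x = exp (x / 2) ^ 2 := by rw [← exp_nat_mul]; ring_nf
  rw [cosh_eq, sinh_eq, hx, exp_neg, exp_neg, hx]
  have hy := exp_pos (x / 2)
  rcases eq_or_ne (exp (x / 2) ^ 2 - 1) 0 with h | h
  · have : exp (x / 2) = 1 := (pow_eq_one_iff_of_nonneg hy.le two_ne_zero).1 (by linarith)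
    simp [this]
  · field_simp
    ring

theorem arcosh_le_log_two_mul {x : ℝ} (hx : 0 < x) : _root_.arcosh x ≤ log (2 * x) := by
  refine log_le_log (by positivity) ?_
  have : √(x ^ 2 - 1) ≤ x := (sqrt_le_sqrt (by linarith)).trans_eq (sqrt_sq hx.le)
  linarith

theorem two_r_ge_arcosh (ε θ₀ r : ℝ) (hε0 : 0 < ε) (hε : ε ≤ 2) (hθ0 : 0 < θ₀) (hθ : θ₀ ≤ π / 2)
    (hr : Real.log (2 / Real.sin θ₀) + Real.log (1 / ε) + 1 ≤ r) :
    2 * r ≥ _root_.arcosh ((1 + Real.cosh ε) / (Real.sinh (ε / 2) ^ 2 * Real.sin θ₀ ^ 2) - 1) := by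
  set s := sin θ₀
  set c := (exp ε + 1) / (exp ε - 1)
  have hs0 : 0 < s := sin_pos_of_pos_of_lt_pi hθ0 (by linarith [pi_pos])
  have hc1 : 1 ≤ c := by
    rw [one_le_div₀ (by linarith [add_one_lt_exp hε0.ne'])]
    linarith
  have hcs : 1 ≤ c / s := (one_le_div₀ hs0).2 (by linarith [sin_le_one θ₀])
  have hlogc : log c ≤ 1 + log (1 / ε) :=
    calc log c ≤ log (exp 1 / ε) :=
          log_le_log (by positivity) (exp_add_one_div_exp_sub_one_le hε0 hε)
      _ = 1 + log (1 / ε) := by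
          rw [div_eq_mul_one_div, log_mul (exp_pos 1).ne' (by positivity), log_exp]
  rw [← div_div, one_add_cosh_div_sinh_half_sq, mul_div_assoc, ← div_pow]
  calc _root_.arcosh (2 * (c / s) ^ 2 - 1) ≤ log (2 * (2 * (c / s) ^ 2 - 1)) :=
        arcosh_le_log_two_mul (by nlinarith)
    _ ≤ log ((2 / s * c) ^ 2) := log_le_log (by nlinarith) (by ring_nf; linarith)
    _ = 2 * (log (2 / s) + log c) := by
        rw [log_pow, log_mul (by positivity) (by positivity)]
        push_cast
        ring
    _ ≤ 2 * r := by linarith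
end

section
/- Let ε ∈ (0, 2], θ₀ ∈ (0, π/2], and let L ≥ 0 (the length ℓ(c)), and let r ≥ log(1/ε) + log(2e/sin θ₀). If cosh²(r + L/2) sin²θ₀ > 1, then cosh²(L/2) / (cosh²(r + L/2) sin²θ₀ − 1) ≤ sinh²(ε/2). -/
open Real

lemma cosh_quad_lb (y : ℝ) (hy : 0 ≤ y) : 1 + y ^ 2 / 2 ≤ Real.cosh y := by
  have h1 : Real.cosh (2 * (y / 2)) = Real.cosh (y / 2) ^ 2 + Real.sinh (y / 2) ^ 2 :=
    Real.cosh_two_mul _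
  have h2 : Real.cosh (y / 2) ^ 2 = Real.sinh (y / 2) ^ 2 + 1 := Real.cosh_sq _
  have h3 : y / 2 ≤ Real.sinh (y / 2) := Real.self_le_sinh_iff.mpr (by linarith)
  have h4 : (2 : ℝ) * (y / 2) = y := by ring
  rw [h4] at h1
  nlinarith [h3, hy]

lemma sinh_cubic_lb (x : ℝ) (hx : 0 ≤ x) : x + x ^ 3 / 8 ≤ Real.sinh x := by
  have h1 : Real.sinh (2 * (x / 2)) = 2 * Real.sinh (x / 2) * Real.cosh (x / 2) :=
    Real.sinh_two_mul _
  have h4 : (2 : ℝ) * (x / 2) = x := by ring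
  rw [h4] at h1
  have h2 : x / 2 ≤ Real.sinh (x / 2) := Real.self_le_sinh_iff.mpr (by linarith)
  have h3 : 1 + (x / 2) ^ 2 / 2 ≤ Real.cosh (x / 2) := cosh_quad_lb _ (by linarith)
  nlinarith [h2, h3, hx]

set_option maxHeartbeats 1000000 in
theorem key_estimate (ε θ₀ L r : ℝ) (hε0 : 0 < ε) (hε : ε ≤ 2) (hθ0 : 0 < θ₀) (hθ : θ₀ ≤ π / 2)
    (hL : 0 ≤ L) (hr : Real.log (1 / ε) + Real.log (2 * Real.exp 1 / Real.sin θ₀) ≤ r)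
    (hpos : 1 < Real.cosh (r + L / 2) ^ 2 * Real.sin θ₀ ^ 2) :
    Real.cosh (L / 2) ^ 2 / (Real.cosh (r + L / 2) ^ 2 * Real.sin θ₀ ^ 2 - 1) ≤
      Real.sinh (ε / 2) ^ 2 := by
  have hs0 : 0 < Real.sin θ₀ :=
    Real.sin_pos_of_pos_of_lt_pi hθ0 (lt_of_le_of_lt hθ (by linarith [Real.pi_pos]))
  have hs1 : Real.sin θ₀ ≤ 1 := Real.sin_le_one _
  set s := Real.sin θ₀ with hs
  set A := Real.cosh (r + L / 2) with hA
  set C := Real.cosh (L / 2) with hC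
  set S := Real.sinh (ε / 2) with hS
  have he : (2.7182818283 : ℝ) < Real.exp 1 := Real.exp_one_gt_d9
  have hepos : (0 : ℝ) < Real.exp 1 := Real.exp_pos 1
  have hApos : 0 < A := Real.cosh_pos _
  have hCpos : (1 : ℝ) ≤ C := Real.one_le_cosh _
  -- exponentiate the hypothesis on r
  have harg : (0 : ℝ) < 1 / ε * (2 * Real.exp 1 / s) := by positivity
  have hlog : Real.log (1 / ε * (2 * Real.exp 1 / s)) ≤ r := by
    rw [Real.log_mul (by positivity) (by positivity)]; exact hr
  have hexp : 1 / ε * (2 * Real.exp 1 / s) ≤ Real.exp r := by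
    calc 1 / ε * (2 * Real.exp 1 / s) = Real.exp (Real.log (1 / ε * (2 * Real.exp 1 / s))) :=
          (Real.exp_log harg).symm
      _ ≤ Real.exp r := Real.exp_le_exp.mpr hlog
  have hcosh_lb : Real.exp (r + L / 2) / 2 ≤ A := by
    rw [hA, Real.cosh_eq]
    have := Real.exp_pos (-(r + L / 2))
    linarith
  have hCexp : C ≤ Real.exp (L / 2) := by
    rw [hC, Real.cosh_eq]
    have h1 : Real.exp (-(L / 2)) ≤ Real.exp (L / 2) := Real.exp_le_exp.mpr (by linarith)
    linarith
  have hexp_split : Real.exp (r + L / 2) = Real.exp r * Real.exp (L / 2) := Real.exp_add _ _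
  -- A ≥ (e/(ε s)) * C
  have hεs : 0 < ε * s := by positivity
  have hkey1 : Real.exp 1 * C ≤ ε * s * A := by
    have h1 : 2 * Real.exp 1 / (ε * s) * Real.exp (L / 2) ≤ Real.exp r * Real.exp (L / 2) := by
      apply mul_le_mul_of_nonneg_right _ (Real.exp_pos _).le
      calc 2 * Real.exp 1 / (ε * s) = 1 / ε * (2 * Real.exp 1 / s) := by field_simp
        _ ≤ Real.exp r := hexp
    have h2 : 2 * Real.exp 1 / (ε * s) * C ≤ 2 * Real.exp 1 / (ε * s) * Real.exp (L / 2) :=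
      mul_le_mul_of_nonneg_left hCexp (by positivity)
    have h3 : 2 * Real.exp 1 / (ε * s) * C ≤ 2 * A := by
      rw [hexp_split] at hcosh_lb; linarith
    rw [div_mul_eq_mul_div, div_le_iff₀ hεs] at h3
    nlinarith [h3]
  -- square it
  have hA2 : Real.exp 1 ^ 2 * C ^ 2 ≤ ε ^ 2 * s ^ 2 * A ^ 2 := by
    have h0 : 0 ≤ Real.exp 1 * C := by positivity
    have := mul_self_le_mul_self h0 hkey1
    nlinarith [this]
  -- key polynomial fact : S^2 * (e^2 - ε^2) ≥ ε^2
  have hScub : ε / 2 + (ε / 2) ^ 3 / 8 ≤ S := sinh_cubic_lb _ (by linarith)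
  have hX0 : (0 : ℝ) ≤ ε / 2 + (ε / 2) ^ 3 / 8 := by positivity
  have hS2 : ε ^ 2 / 4 + ε ^ 4 / 64 ≤ S ^ 2 := by
    have hSS := mul_le_mul hScub hScub hX0 (hX0.trans hScub)
    have h6 : (0 : ℝ) ≤ ε ^ 6 := by positivity
    calc ε ^ 2 / 4 + ε ^ 4 / 64 ≤ (ε / 2 + (ε / 2) ^ 3 / 8) * (ε / 2 + (ε / 2) ^ 3 / 8) := by
          nlinarith [h6]
      _ ≤ S * S := hSS
      _ = S ^ 2 := (pow_two S).symm
  have hSpos : 0 < S := lt_of_lt_of_le (by positivity) hScub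
  have he2 : (7.389 : ℝ) ≤ Real.exp 1 ^ 2 := by nlinarith [he]
  have hee : (0 : ℝ) ≤ Real.exp 1 ^ 2 - ε ^ 2 := by nlinarith
  have hkey2 : ε ^ 2 ≤ S ^ 2 * (Real.exp 1 ^ 2 - ε ^ 2) := by
    have hpoly : ε ^ 2 ≤ (ε ^ 2 / 4 + ε ^ 4 / 64) * (Real.exp 1 ^ 2 - ε ^ 2) := by
      nlinarith [sq_nonneg ε, sq_nonneg (ε ^ 2 - 4), mul_nonneg (sq_nonneg ε) (sq_nonneg ε),
        mul_nonneg (mul_nonneg (sq_nonneg ε) (sq_nonneg ε)) hε0.le]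
    have := mul_le_mul_of_nonneg_right hS2 hee
    linarith
  -- assemble
  have hD : 0 < A ^ 2 * s ^ 2 - 1 := by linarith
  rw [div_le_iff₀ hD]
  have hstep : S ^ 2 * ε ^ 2 ≤ S ^ 2 * Real.exp 1 ^ 2 - ε ^ 2 := by nlinarith [hkey2]
  have hnn : (0 : ℝ) ≤ S ^ 2 * Real.exp 1 ^ 2 - ε ^ 2 :=
    le_trans (by positivity) hstep
  have hC2 : (1 : ℝ) ≤ C ^ 2 := by nlinarith [hCpos]
  have h2 : ε ^ 2 * C ^ 2 ≤ S ^ 2 * (Real.exp 1 ^ 2 * C ^ 2 - ε ^ 2) := by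
    have := mul_le_mul_of_nonneg_right hC2 hnn
    nlinarith [this, hstep]
  have h1 : S ^ 2 * (Real.exp 1 ^ 2 * C ^ 2 - ε ^ 2) ≤ S ^ 2 * (ε ^ 2 * s ^ 2 * A ^ 2 - ε ^ 2) := by
    have := mul_le_mul_of_nonneg_left hA2 (sq_nonneg S)
    nlinarith [this]
  have hfin : ε ^ 2 * C ^ 2 ≤ ε ^ 2 * (S ^ 2 * (A ^ 2 * s ^ 2 - 1)) := by
    have heq : S ^ 2 * (ε ^ 2 * s ^ 2 * A ^ 2 - ε ^ 2) = ε ^ 2 * (S ^ 2 * (A ^ 2 * s ^ 2 - 1)) := by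
      ring
    linarith [h1, h2, heq.le, heq.ge]
  have hε2 : (0 : ℝ) < ε ^ 2 := by positivity
  exact le_of_mul_le_mul_left hfin hε2
end
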